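/- Let q be a prime power and let m ≥ 2 with either m > 2, or m = 2 and q > 2. Then every primitive element ξ of GF(q^m) (i.e., every ξ of multiplicative order q^m − 1) is nonstandard of degree m over GF(q). -/

import Mathlib

open Polynomial

/-- The subgroup `⟨ξ⟩ = {1, ξ, ξ², …}` of powers of an element `ξ`. -/
def powersOf {E : Type*} [Monoid E] (ξ : E) : Set E := {x | ∃ k : ℕ, x = ξ ^ k}

/-- The map `x ↦ L₀x + L₁x^q + ⋯ + L_{m-1}x^{q^{m-1}}` given by the `q`-polynomial
with coefficient vector `c`. -/
def qPolyMap {E : Type*} [Field E] (q : ℕ) {m : ℕ} (c : Fin m → E) (x : E) : E :=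
  ∑ i : Fin m, c i * x ^ q ^ (i : ℕ)

/-- `u` is a linear recurring sequence (an `f`-sequence) with characteristic polynomial
`f = xᵐ - σ_{m-1}x^{m-1} - ⋯ - σ₀`, i.e. `u_{k+m} = σ_{m-1}u_{k+m-1} + ⋯ + σ₀u_k`
where `σᵢ = -(f.coeff i)`. -/
def IsLRS {F E : Type*} [Field F] [Field E] [Algebra F E] (f : Polynomial F) (u : ℕ → E) : Prop :=
  ∀ k : ℕ, u (k + f.natDegree) =
    ∑ i ∈ Finset.range f.natDegree, algebraMap F E (-(f.coeff i)) * u (k + i)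

/-- The `q`-order of `ξ` over `F`: the least `d > 0` with `ξ ^ d ∈ F`. -/
noncomputable def qOrder (F : Type*) {E : Type*} [Field F] [Field E] [Algebra F E] (ξ : E) : ℕ :=
  sInf {d : ℕ | 0 < d ∧ ξ ^ d ∈ Set.range (algebraMap F E)}

/-- `ξ` is nonstandard of degree `m` over `F`: its minimal polynomial `f` over `F` has
degree `m`, and `⟨ξ⟩` can be generated by an `f`-sequence `u` of smallest period `|⟨ξ⟩|`
with `u 0 = 1` and `(u_0, …, u_{m-1}) ≠ (1, ζ, …, ζ^{m-1})` for every zero `ζ` of `f`. -/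
def IsNonstandard (F : Type*) {E : Type*} [Field F] [Field E] [Algebra F E]
    (m : ℕ) (ξ : E) : Prop :=
  (minpoly F ξ).natDegree = m ∧
  ∃ u : ℕ → E, IsLRS (minpoly F ξ) u ∧
    IsLeast {p : ℕ | 0 < p ∧ ∀ k, u (k + p) = u k} (orderOf ξ) ∧
    Set.range u = powersOf ξ ∧
    u 0 = 1 ∧
    ∀ ζ : E, (aeval ζ) (minpoly F ξ) = 0 → ∃ i : Fin m, u (i : ℕ) ≠ ζ ^ (i : ℕ)
section Aux

/-!
A primitive `ξ` generates `Eˣ = ⟨ξ⟩`. For any `F`-linear automorphism `L` of `E` with `L 1 = 1`,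
the sequence `L (ξ ^ k)` is again an `f`-sequence (`f` the minimal polynomial of `ξ`) with least
period `ord ξ`, range `L (Eˣ) = Eˣ` and first term `1`; its initial segment is nonstandard as soon
as `L ξ` is not a root of `f`. Since `1, ξ` are independent and linear automorphisms act
transitively on independent pairs, `L ξ` can be any `μ` with `1, μ` independent, i.e. `μ ∉ F`.
Such a `μ` that is also not one of the at most `m` roots of `f` exists because `q + m < qᵐ`,
which is exactly where `m > 2` or `q > 2` is needed.
-/

theorem LinearIndependent.exists_linearEquiv_apply_eq {K V ι : Type*} [Field K]
    [AddCommGroup V] [Module K V] [Finite ι] {v w : ι → V} (hv : LinearIndependent K v)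
    (hw : LinearIndependent K w) : ∃ g : V ≃ₗ[K] V, ∀ i, g (v i) = w i := by
  have : FiniteDimensional K (Submodule.span K (Set.range v)) :=
    FiniteDimensional.span_of_finite K (Set.finite_range v)
  obtain ⟨g, hg⟩ := Submodule.exists_linearEquiv_restrict_eq
    (hv.linearCombinationEquiv.symm ≪≫ₗ hw.linearCombinationEquiv)
  refine ⟨g, fun i => ?_⟩
  simpa using (hg (hv.linearCombinationEquiv (Finsupp.single i 1))).symm

theorem linearIndependent_one_pair_iff {K A : Type*} [Field K] [Ring A] [Nontrivial A]
    [Algebra K A] {x : A} :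
    LinearIndependent K ![1, x] ↔ x ∉ Set.range (algebraMap K A) := by
  simp [LinearIndependent.pair_iff' one_ne_zero, Algebra.algebraMap_eq_smul_one]

theorem Nat.add_lt_pow {q m : ℕ} (hq : 2 ≤ q) (hm : 2 < m ∨ (m = 2 ∧ 2 < q)) :
    q + m < q ^ m := by
  rcases hm with hm | ⟨rfl, hq⟩
  · induction m, hm using Nat.le_induction with
    | base =>
      have : 4 ≤ q * q := by nlinarith
      rw [pow_succ, pow_two]
      nlinarith
    | succ n _ ih =>
      rw [pow_succ]
      nlinarith
  · nlinarith

theorem powersOf_eq_setOf_ne_zero {E : Type*} [Field E] [Fintype E] {ξ : E}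
    (hξ : orderOf ξ = Fintype.card E - 1) : powersOf ξ = {x | x ≠ 0} := by
  classical
  have hcard : 1 < Fintype.card E := Fintype.one_lt_card
  have hξ0 : ξ ≠ 0 := by
    rintro rfl
    rw [orderOf_zero] at hξ
    omega
  have himage : (Finset.range (orderOf ξ)).image (ξ ^ ·) = Finset.univ.erase 0 := by
    refine Finset.eq_of_subset_of_card_le (fun x hx => ?_) ?_
    · obtain ⟨k, -, rfl⟩ := Finset.mem_image.1 hx
      exact Finset.mem_erase.2 ⟨pow_ne_zero k hξ0, Finset.mem_univ _⟩
    · rw [Finset.card_image_of_injOn (by simpa using pow_injOn_Iio_orderOf),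
        Finset.card_erase_of_mem (Finset.mem_univ _), Finset.card_univ, Finset.card_range, hξ]
  ext x
  constructor
  · rintro ⟨k, rfl⟩
    exact pow_ne_zero k hξ0
  · intro hx
    obtain ⟨k, -, hk⟩ := Finset.mem_image.1 (himage ▸ Finset.mem_erase.2 ⟨hx, Finset.mem_univ x⟩)
    exact ⟨k, hk.symm⟩

theorem natDegree_minpoly_eq_finrank_of_powersOf_eq {F E : Type*} [Field F] [Field E]
    [Algebra F E] [FiniteDimensional F E] {ξ : E} (hgen : powersOf ξ = {x | x ≠ 0}) :
    (minpoly F ξ).natDegree = Module.finrank F E := by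
  refine (Field.primitive_element_iff_minpoly_natDegree_eq F ξ).1 (eq_top_iff.2 fun x _ => ?_)
  by_cases hx : x = 0
  · exact hx ▸ zero_mem _
  · obtain ⟨k, rfl⟩ : x ∈ powersOf ξ := hgen ▸ hx
    exact pow_mem (IntermediateField.mem_adjoin_simple_self F ξ) k

theorem exists_notMem_range_algebraMap_and_aeval_ne_zero {F E : Type*} [Field F] [Fintype F]
    [Field E] [Fintype E] [Algebra F E] {p : F[X]} (hp : p ≠ 0)
    (hcard : Fintype.card F + p.natDegree < Fintype.card E) :
    ∃ μ : E, μ ∉ Set.range (algebraMap F E) ∧ aeval μ p ≠ 0 := by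
  classical
  have hbad : (Finset.univ.image (algebraMap F E) ∪ (p.aroots E).toFinset).card
      < (Finset.univ : Finset E).card :=
    calc _ ≤ (Finset.univ.image (algebraMap F E)).card + (p.aroots E).toFinset.card :=
          Finset.card_union_le _ _
      _ ≤ Fintype.card F + p.natDegree := by
          gcongr
          · exact Finset.card_image_le
          · exact (Multiset.toFinset_card_le _).trans
              ((card_roots' _).trans natDegree_map_le)
      _ < _ := hcard
  obtain ⟨μ, -, hμ⟩ := Finset.exists_mem_notMem_of_card_lt_card hbad
  refine ⟨μ, fun hμF => hμ ?_, fun hμp => hμ ?_⟩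
  · obtain ⟨a, rfl⟩ := hμF
    exact Finset.mem_union_left _ (Finset.mem_image_of_mem _ (Finset.mem_univ a))
  · exact Finset.mem_union_right _ (Multiset.mem_toFinset.2 (mem_aroots.2 ⟨hp, hμp⟩))

section LinearRecurrence

variable {F E : Type*} [Field F] [Field E] [Algebra F E]

theorem isLRS_pow {f : F[X]} (hf : f.Monic) {ξ : E} (hξ : aeval ξ f = 0) :
    IsLRS f (ξ ^ ·) := by
  have hroot : ξ ^ f.natDegree + ∑ i ∈ Finset.range f.natDegree, f.coeff i • ξ ^ i = 0 := by
    rw [← hξ, aeval_eq_sum_range, Finset.sum_range_succ, hf.coeff_natDegree, one_smul,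
      add_comm]
  have htop : ξ ^ f.natDegree =
      ∑ i ∈ Finset.range f.natDegree, algebraMap F E (-(f.coeff i)) * ξ ^ i := by
    simp [eq_neg_of_add_eq_zero_left hroot, ← Finset.sum_neg_distrib, Algebra.smul_def]
  intro k
  simp only [pow_add, htop, Finset.mul_sum, mul_left_comm]

theorem IsLRS.map {E' : Type*} [Field E'] [Algebra F E'] {f : F[X]} {u : ℕ → E}
    (hu : IsLRS f u) (L : E →ₗ[F] E') : IsLRS f (L ∘ u) := by
  intro k
  simp only [Function.comp_apply, hu k, map_sum, ← Algebra.smul_def, map_smul]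

end LinearRecurrence

theorem isLeast_period_comp_pow {M α : Type*} [Monoid M] {ξ : M} (hξ : 0 < orderOf ξ)
    {g : M → α} (hg : g.Injective) :
    IsLeast {p | 0 < p ∧ ∀ k, g (ξ ^ (k + p)) = g (ξ ^ k)} (orderOf ξ) := by
  refine ⟨⟨hξ, fun k => by rw [pow_add, pow_orderOf_eq_one, mul_one]⟩, ?_⟩
  rintro p ⟨hp, hperiod⟩
  have hξp : ξ ^ p = 1 := by simpa using hg (hperiod 0)
  exact Nat.le_of_dvd hp (orderOf_dvd_of_pow_eq_one hξp)

theorem isNonstandard_of_linearEquiv {F E : Type*} [Field F] [Field E] [Algebra F E] {m : ℕ}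
    {ξ : E} (hξ : 0 < orderOf ξ) (hgen : powersOf ξ = {x | x ≠ 0})
    (hdeg : (minpoly F ξ).natDegree = m) (L : E ≃ₗ[F] E) (hL : L 1 = 1)
    (hstart : ∀ ζ : E, aeval ζ (minpoly F ξ) = 0 → ∃ i : Fin m, L (ξ ^ (i : ℕ)) ≠ ζ ^ (i : ℕ)) :
    IsNonstandard F m ξ := by
  have hint : IsIntegral F ξ :=
    IsIntegral.of_pow hξ (by rw [pow_orderOf_eq_one]; exact isIntegral_one)
  refine ⟨hdeg, fun k => L (ξ ^ k), ?_, isLeast_period_comp_pow hξ L.injective, ?_,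
    by simpa using hL, hstart⟩
  · exact (isLRS_pow (minpoly.monic hint) (minpoly.aeval F ξ)).map L.toLinearMap
  · have hrange : Set.range (ξ ^ · : ℕ → E) = {x | x ≠ 0} := by
      rw [← hgen]
      ext x
      simp [powersOf, eq_comm]
    rw [Set.range_comp' L, hrange, hgen]
    ext x
    simp only [Set.mem_image, Set.mem_ofPred_eq]
    exact ⟨by rintro ⟨y, hy, rfl⟩; simpa using hy,
      fun hx => ⟨L.symm x, by simpa using hx, L.apply_symm_apply x⟩⟩

/-- if `m > 2`, or `m = 2` and `q > 2`, then every primitive element `ξ`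
of `GF(qᵐ)` (i.e. of multiplicative order `qᵐ - 1`) is nonstandard of degree `m` over
`GF(q)`. -/
theorem primitive_isNonstandard {F E : Type*} [Field F] [Fintype F] [Field E] [Fintype E]
    [Algebra F E] (m : ℕ) (hrank : Module.finrank F E = m)
    (hm : 2 < m ∨ (m = 2 ∧ 2 < Fintype.card F))
    (ξ : E) (hprim : orderOf ξ = Fintype.card F ^ m - 1) :
    IsNonstandard F m ξ := by
  have hq : 2 ≤ Fintype.card F := Fintype.one_lt_card
  have hcard : Fintype.card E = Fintype.card F ^ m := by
    rw [Module.card_eq_pow_finrank (K := F), hrank]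
  have hξ : 0 < orderOf ξ := by
    rw [hprim, Nat.sub_pos_iff_lt]
    exact Nat.one_lt_pow (by omega) hq
  have hgen := powersOf_eq_setOf_ne_zero (hcard ▸ hprim)
  have hdeg : (minpoly F ξ).natDegree = m :=
    hrank ▸ natDegree_minpoly_eq_finrank_of_powersOf_eq hgen
  have hξF : ξ ∉ Set.range (algebraMap F E) := fun h => by
    have := minpoly.natDegree_eq_one_iff.2 h
    omega
  obtain ⟨μ, hμF, hμ⟩ := exists_notMem_range_algebraMap_and_aeval_ne_zero
    (minpoly.ne_zero (IsIntegral.of_finite F ξ)) (hdeg ▸ hcard ▸ Nat.add_lt_pow hq hm)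
  obtain ⟨L, hL⟩ := (linearIndependent_one_pair_iff.2 hξF).exists_linearEquiv_apply_eq
    (linearIndependent_one_pair_iff.2 hμF)
  have hLξ : L ξ = μ := by simpa using hL 1
  refine isNonstandard_of_linearEquiv hξ hgen hdeg L (by simpa using hL 0)
    fun ζ hζ => ⟨⟨1, by omega⟩, ?_⟩
  intro h
  rw [pow_one, pow_one, hLξ] at h
  exact hμ (h ▸ hζ)
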